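/- arXiv:1205.3537 — 6 statements merged into one kernel-verified Lean document; each statement's English description precedes it below -/
import Mathlib

section
/- Let 𝔄 be a unital C*-algebra and let T ∈ 𝔄 be a norm limit of quasinilpotent elements of 𝔄. Then the spectrum of T is connected. -/
/-!
Since `0 ∈ σ(Qₙ)` for every `n`, upper semicontinuity of the spectrum gives `0 ∈ σ(T)`. Suppose
`σ(T)` splits into disjoint closed pieces, `0` lying in the first and a nonempty piece `K` in the
second. A bounded neighbourhood `U` of `K` whose closure avoids the first piece has its frontier in
the resolvent set of `T`, where the resolvent of `T` is bounded by some `M`. For `Qₙ` close to `T`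
the resolvent of `Qₙ` is then bounded by `2M` on the frontier of `U`; it is holomorphic on the
closure of `U` because `σ(Qₙ) = {0}`, so by the maximum principle it is bounded by `2M` on all of
`U`. Perturbing back from `Qₙ` to `T` shows that `U`, and hence `K`, lies in the resolvent set of
`T`: a contradiction.
-/

open Metric Set Filter Topology

theorem IsUnit.isUnit_and_norm_inverse_le_two_mul {R : Type*} [NormedRing R] [CompleteSpace R]
    {x y : R} {M : ℝ} (hx : IsUnit x) (hxM : ‖Ring.inverse x‖ ≤ M) (hyx : M * ‖y - x‖ ≤ 2⁻¹) :
    IsUnit y ∧ ‖Ring.inverse y‖ ≤ 2 * M := by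
  obtain ⟨u, rfl⟩ := hx
  rw [Ring.inverse_unit] at hxM
  set s : R := ↑u⁻¹ * (↑u - y)
  have hs : ‖s‖ < 1 :=
    calc ‖s‖ ≤ ‖(↑u⁻¹ : R)‖ * ‖↑u - y‖ := norm_mul_le _ _
      _ ≤ M * ‖y - ↑u‖ := by rw [norm_sub_rev]; gcongr
      _ < 1 := by linarith
  have hy : y = ↑(u * Units.oneSub s hs) := by
    simp [s, mul_sub, ← mul_assoc]
  refine ⟨hy ▸ Units.isUnit _, ?_⟩
  obtain ⟨v, rfl⟩ : IsUnit y := hy ▸ Units.isUnit _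
  rw [Ring.inverse_unit]
  -- `v⁻¹ = u⁻¹ + v⁻¹ (u - v) u⁻¹` bounds `‖v⁻¹‖` by `M + ‖v⁻¹‖ / 2`.
  have hres : (↑v⁻¹ : R) = ↑u⁻¹ + ↑v⁻¹ * (↑u - ↑v) * ↑u⁻¹ := by
    simp [mul_sub, sub_mul, mul_assoc]
  have hbound : ‖(↑v⁻¹ : R)‖ ≤ M + ‖(↑v⁻¹ : R)‖ * ‖(↑v : R) - ↑u‖ * M :=
    calc ‖(↑v⁻¹ : R)‖ ≤ ‖(↑u⁻¹ : R)‖ + ‖(↑v⁻¹ : R)‖ * ‖(↑u : R) - ↑v‖ * ‖(↑u⁻¹ : R)‖ := by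
          conv_lhs => rw [hres]
          exact (norm_add_le _ _).trans (by gcongr; exact norm_mul₃_le)
      _ ≤ M + ‖(↑v⁻¹ : R)‖ * ‖(↑v : R) - ↑u‖ * M := by rw [norm_sub_rev]; gcongr
  nlinarith [norm_nonneg (↑v⁻¹ : R)]

theorem spectrum.mem_of_tendsto {𝕜 A ι : Type*} [NormedField 𝕜] [NormedRing A]
    [NormedAlgebra 𝕜 A] [CompleteSpace A] {l : Filter ι} [l.NeBot] {b : ι → A} {a : A} {z : 𝕜}
    (hb : Tendsto b l (𝓝 a)) (hz : ∀ᶠ i in l, z ∈ spectrum 𝕜 (b i)) : z ∈ spectrum 𝕜 a :=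
  have hclosed : IsClosed {x : A | z ∈ spectrum 𝕜 x} :=
    (Units.isOpen.preimage (continuous_const.sub continuous_id)).isClosed_compl
  hclosed.mem_of_tendsto hb hz

namespace spectrum

variable {A : Type*} [NormedRing A] [NormedAlgebra ℂ A] [CompleteSpace A]

theorem mem_resolventSet_and_norm_resolvent_le_two_mul {a b : A} {z : ℂ} {M : ℝ}
    (hz : z ∈ resolventSet ℂ a) (hM : ‖resolvent a z‖ ≤ M) (hba : M * ‖b - a‖ ≤ 2⁻¹) :
    z ∈ resolventSet ℂ b ∧ ‖resolvent b z‖ ≤ 2 * M :=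
  IsUnit.isUnit_and_norm_inverse_le_two_mul hz hM
    (by rwa [sub_sub_sub_cancel_left, norm_sub_rev])

theorem exists_pos_closure_subset_resolventSet {a : A} {U : Set ℂ} (hU : Bornology.IsBounded U)
    (hfr : frontier U ⊆ resolventSet ℂ a) :
    ∃ ε > 0, ∀ b : A, ‖b - a‖ < ε → closure U ⊆ resolventSet ℂ b →
      closure U ⊆ resolventSet ℂ a := by
  have hcont : ContinuousOn (resolvent a) (frontier U) := fun z hz =>
    (hasDerivAt_resolvent_const_left (hfr hz)).continuousAt.continuousWithinAt
  obtain ⟨M, hMpos, hM⟩ :=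
    ((hU.isCompact_closure.of_isClosed_subset isClosed_frontier frontier_subset_closure)
      |>.image_of_continuousOn hcont).isBounded.exists_pos_norm_le
  refine ⟨(4 * M)⁻¹, by positivity, fun b hb hbU z hz => ?_⟩
  have hclose : M * ‖b - a‖ ≤ 4⁻¹ :=
    calc M * ‖b - a‖ ≤ M * (4 * M)⁻¹ := by gcongr
      _ = 4⁻¹ := by field_simp
  have hfrb : ∀ w ∈ frontier U, ‖resolvent b w‖ ≤ 2 * M := fun w hw =>
    (mem_resolventSet_and_norm_resolvent_le_two_mul (hfr hw) (hM _ ⟨w, hw, rfl⟩)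
      (by linarith)).2
  have hdiff : DiffContOnCl ℂ (resolvent b) U :=
    DifferentiableOn.diffContOnCl fun w hw =>
      (hasDerivAt_resolvent_const_left (hbU hw)).differentiableAt.differentiableWithinAt
  have hzb : ‖resolvent b z‖ ≤ 2 * M :=
    Complex.norm_le_of_forall_mem_frontier_norm_le hU hdiff hfrb hz
  exact (mem_resolventSet_and_norm_resolvent_le_two_mul (hbU hz) hzb
    (by rw [norm_sub_rev]; linarith)).1

theorem exists_pos_spectrum_diff_nonempty {a : A} {u v : Set ℂ} (hu : IsClosed u)
    (hv : IsClosed v) (hcov : spectrum ℂ a ⊆ u ∪ v) (hdisj : Disjoint u v)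
    (hne : (spectrum ℂ a ∩ v).Nonempty) :
    ∃ ε > 0, ∀ b : A, ‖b - a‖ < ε → (spectrum ℂ b \ u).Nonempty := by
  set K := spectrum ℂ a ∩ v
  have hK : IsCompact K := (spectrum.isCompact a).inter_right hv
  obtain ⟨δ, hδ, hδu⟩ := hK.exists_cthickening_subset_open hu.isOpen_compl
    fun z hz => hdisj.notMem_of_mem_right hz.2
  set U := thickening δ K
  have hclU : closure U ⊆ uᶜ := (closure_thickening_subset_cthickening δ K).trans hδu
  have hfr : frontier U ⊆ resolventSet ℂ a := by
    intro z hz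
    rw [isOpen_thickening.frontier_eq] at hz
    refine not_not.1 fun hza => ?_
    rcases hcov hza with hzu | hzv
    · exact hclU hz.1 hzu
    · exact hz.2 (self_subset_thickening hδ K ⟨hza, hzv⟩)
  obtain ⟨ε, hε, hres⟩ := exists_pos_closure_subset_resolventSet hK.isBounded.thickening hfr
  refine ⟨ε, hε, fun b hb => ?_⟩
  by_contra hb_u
  rw [not_nonempty_iff_eq_empty, sdiff_eq_empty] at hb_u
  have hbU : closure U ⊆ resolventSet ℂ b := fun z hz => not_not.1 fun hzb => hclU hz (hb_u hzb)
  obtain ⟨z, hzK⟩ := hne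
  exact hzK.1 (hres b hb hbU (subset_closure (self_subset_thickening hδ K hzK)))

end spectrum

/-- If `T` in a unital C*-algebra is a norm limit of quasinilpotent elements,
then the spectrum of `T` is connected. -/
theorem spectrum_isConnected_of_limit_quasinilpotent
    {A : Type*} [CStarAlgebra A] (T : A) (Q : ℕ → A)
    (hQ : ∀ n, spectrum ℂ (Q n) = {0})
    (hlim : Filter.Tendsto Q Filter.atTop (nhds T)) :
    IsConnected (spectrum ℂ T) := by
  have h0 : (0 : ℂ) ∈ spectrum ℂ T :=
    spectrum.mem_of_tendsto hlim (Eventually.of_forall fun n => by simp [hQ n])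
  refine ⟨⟨0, h0⟩, (isPreconnected_iff_subset_of_fully_disjoint_closed (spectrum.isClosed T)).2 ?_⟩
  intro u v hu hv hcov hdisj
  wlog h0u : (0 : ℂ) ∈ u generalizing u v
  · exact (this v u hv hu (union_comm u v ▸ hcov) hdisj.symm ((hcov h0).resolve_left h0u)).symm
  left
  by_contra hTu
  obtain ⟨z, hzT, hzu⟩ := not_subset.1 hTu
  obtain ⟨ε, hε, hdiff⟩ := spectrum.exists_pos_spectrum_diff_nonempty hu hv hcov hdisj
    ⟨z, hzT, (hcov hzT).resolve_left hzu⟩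
  obtain ⟨n, hn⟩ := (hlim.eventually (ball_mem_nhds T hε)).exists
  obtain ⟨w, hwQ, hwu⟩ := hdiff (Q n) (by rwa [← dist_eq_norm])
  rw [hQ n, mem_singleton_iff] at hwQ
  exact hwu (hwQ ▸ h0u)
end

section
/- Let 𝔄 be a unital C*-algebra and let T ∈ 𝔄 be a norm limit of quasinilpotent elements of 𝔄. Then for every λ ∈ ℂ \ σ(T), the element λ·1 − T lies in the connected component of the identity in the invertible group of 𝔄. -/
/-!
The invertibles form an open subset of a real normed space, so their connected components are
open; hence for a quasinilpotent `q` close enough to `T`, `λ - q` lies in the component of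
`λ - T`. Since `σ(w q) ⊆ {0}`, every `z - w q` with `z ≠ 0` is invertible, and these elements
form a continuous image of the connected space `ℂˣ × ℂ` that contains both `1` and `λ - q`.
-/

open Set Filter Topology

namespace Units

variable {R : Type*} [NormedRing R] [HasSummableGeomSeries R]

theorem mem_connectedComponent_of_isPreconnected {S : Set R} (hS : IsPreconnected S)
    (hSu : ∀ x ∈ S, IsUnit x) {u v : Rˣ} (hu : (u : R) ∈ S) (hv : (v : R) ∈ S) :
    v ∈ connectedComponent u := by
  have hpre : IsPreconnected (val ⁻¹' S : Set Rˣ) := by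
    rwa [← isOpenEmbedding_val.isInducing.isPreconnected_image, image_preimage_eq_of_subset hSu]
  exact hpre.subset_connectedComponent hu hv

theorem image_val_connectedComponent_mem_nhds [NormedSpace ℝ R] (u : Rˣ) :
    val '' connectedComponent u ∈ 𝓝 (u : R) := by
  have : LocallyConnectedSpace Rˣ := isOpenEmbedding_val.locallyConnectedSpace
  exact (isOpenMap_val _ isOpen_connectedComponent).mem_nhds ⟨u, mem_connectedComponent, rfl⟩

end Units

theorem isUnit_smul_one_sub_smul_of_spectrum_eq_zero {𝕜 A : Type*} [Field 𝕜] [Ring A]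
    [Algebra 𝕜 A] {q : A} (hq : spectrum 𝕜 q = {0}) {z : 𝕜} (hz : z ≠ 0) (w : 𝕜) :
    IsUnit (z • (1 : A) - w • q) := by
  rcases eq_or_ne w 0 with rfl | hw
  · simpa [← Algebra.algebraMap_eq_smul_one] using
      (Units.mk0 z hz).isUnit.map (algebraMap 𝕜 A)
  have hspec : spectrum 𝕜 (w • q) = {0} := by
    rw [← Units.val_mk0 hw, ← Units.smul_def, spectrum.unit_smul_eq_smul, hq,
      smul_set_singleton, smul_zero]
  have hz' : z ∉ spectrum 𝕜 (w • q) := hspec ▸ hz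
  rwa [spectrum.notMem_iff, Algebra.algebraMap_eq_smul_one] at hz'

theorem mem_connectedComponent_one_of_spectrum_eq_zero {A : Type*} [NormedRing A]
    [NormedAlgebra ℂ A] [HasSummableGeomSeries A] {q : A} (hq : spectrum ℂ q = {0})
    {lam : ℂ} {u : Aˣ} (hu : (u : A) = lam • 1 - q) : u ∈ connectedComponent 1 := by
  have hlam : lam ≠ 0 := by
    rintro rfl
    have hq0 : (0 : ℂ) ∈ spectrum ℂ q := hq ▸ mem_singleton 0
    exact (spectrum.zero_mem_iff ℂ).mp hq0 (by simpa [hu] using (-u).isUnit)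
  let f : ℂˣ × ℂ → A := fun p ↦ (p.1 : ℂ) • (1 : A) - p.2 • q
  have hf : Continuous f := by fun_prop
  refine Units.mem_connectedComponent_of_isPreconnected (isPreconnected_range hf) ?_
    ⟨(1, 0), by simp [f]⟩ ⟨(Units.mk0 lam hlam, 1), by simp [f, hu]⟩
  rintro _ ⟨p, rfl⟩
  exact isUnit_smul_one_sub_smul_of_spectrum_eq_zero hq p.1.ne_zero p.2

/-- If `T` in a unital C*-algebra is a norm limit of quasinilpotent elements,
then for every `λ ∉ σ(T)` the element `λ·1 - T` lies in the connected component
of the identity of the invertible group. -/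
theorem smul_one_sub_limit_quasinilpotent_mem_connectedComponent_one
    {A : Type*} [CStarAlgebra A] (T : A) (Q : ℕ → A)
    (hQ : ∀ n, spectrum ℂ (Q n) = {0})
    (hlim : Filter.Tendsto Q Filter.atTop (nhds T))
    (lam : ℂ) (hlam : lam ∉ spectrum ℂ T) :
    ∃ u : Aˣ, (u : A) = lam • (1 : A) - T ∧ u ∈ connectedComponent (1 : Aˣ) := by
  rw [spectrum.notMem_iff, Algebra.algebraMap_eq_smul_one] at hlam
  have hclose : Tendsto (fun n ↦ lam • (1 : A) - Q n) atTop (𝓝 (hlam.unit : A)) :=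
    hlam.unit_spec.symm ▸ tendsto_const_nhds.sub hlim
  obtain ⟨N, v, hv, hvN⟩ :=
    (hclose.eventually_mem (Units.image_val_connectedComponent_mem_nhds hlam.unit)).exists
  refine ⟨hlam.unit, hlam.unit_spec, ?_⟩
  rw [connectedComponent_eq (mem_connectedComponent_one_of_spectrum_eq_zero (hQ N) hvN),
    ← connectedComponent_eq hv]
  exact mem_connectedComponent
end

section
/- Let 𝔄 be a unital C*-algebra and P ∈ 𝔄 a projection with P ≠ 0. Then dist(P, QuasiNil(𝔄)) ≥ 1/2, i.e. ‖P − Q‖ ≥ 1/2 for every quasinilpotent Q ∈ 𝔄. -/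
/-!
Write `d = ‖Q - P‖` and `g = 1/2 - 2 d²`. Comparing the parts `P c` and `(1 - P) c` of
`c = Qⁿ P` in the C⋆-order, one shows inductively that the first dominates the second and that
`gⁿ • P ≤ (P Qⁿ P)⋆ (P Qⁿ P)`, so `gⁿ ≤ ‖Qⁿ‖²`. If `d < 1/2` then `g > 0`, and Gelfand's formula
gives `√g ≤ spectralRadius Q = 0`, a contradiction.
-/

open Filter

theorem le_spectralRadius_of_pow_le_norm_pow {A : Type*} [NormedRing A] [NormedAlgebra ℂ A]
    [CompleteSpace A] {a : A} {r : ℝ} (hr : 0 ≤ r) (h : ∀ n : ℕ, r ^ n ≤ ‖a ^ n‖) :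
    ENNReal.ofReal r ≤ spectralRadius ℂ a := by
  refine ge_of_tendsto (spectrum.pow_norm_pow_one_div_tendsto_nhds_spectralRadius a) ?_
  filter_upwards [eventually_ne_atTop 0] with n hn
  refine ENNReal.ofReal_le_ofReal ?_
  calc r = (r ^ n) ^ (1 / n : ℝ) := by rw [one_div, Real.pow_rpow_inv_natCast hr hn]
    _ ≤ ‖a ^ n‖ ^ (1 / n : ℝ) := by gcongr; exact h n

namespace IsStarProjection

theorem star_mul_self_eq {R : Type*} [Ring R] [StarRing R] {p : R} (hp : IsStarProjection p)
    (a : R) : star (p * a) * (p * a) = star a * (p * a) := by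
  rw [star_mul, hp.isSelfAdjoint.star_eq, mul_assoc, ← mul_assoc p, hp.isIdempotentElem.eq]

theorem star_mul_self_add_star_mul_self_one_sub {R : Type*} [Ring R] [StarRing R] {p : R}
    (hp : IsStarProjection p) (a : R) :
    star (p * a) * (p * a) + star ((1 - p) * a) * ((1 - p) * a) = star a * a := by
  rw [hp.star_mul_self_eq, hp.one_sub.star_mul_self_eq, ← mul_add, ← add_mul,
    add_sub_cancel, one_mul]

theorem norm_eq_one {E : Type*} [NormedRing E] [StarRing E] [CStarRing E] {p : E}
    (hp : IsStarProjection p) (h : p ≠ 0) : ‖p‖ = 1 := by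
  have hsq : ‖p‖ * ‖p‖ = ‖p‖ := by
    rw [← CStarRing.norm_star_mul_self, hp.isSelfAdjoint.star_eq, hp.isIdempotentElem.eq]
  exact (mul_eq_right₀ (norm_ne_zero_iff.mpr h)).mp hsq

end IsStarProjection

section CStarAlgebra

variable {A : Type*} [CStarAlgebra A] [PartialOrder A] [StarOrderedRing A]

theorem half_smul_star_mul_self_le (x u : A) :
    (1 / 2 : ℝ) • (star x * x) ≤ star (x + u) * (x + u) + star u * u := by
  have key : star (x + u) * (x + u) + star u * u
      = (1 / 2 : ℝ) • (star (x + 2 • u) * (x + 2 • u)) + (1 / 2 : ℝ) • (star x * x) := by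
    simp only [star_add, star_nsmul, add_mul, mul_add, smul_mul_assoc, mul_smul_comm, smul_add]
    module
  rw [key]
  exact le_add_of_nonneg_left (smul_nonneg (by norm_num) (star_mul_self_nonneg _))

theorem star_mul_self_le_norm_sq_smul (b a : A) :
    star (b * a) * (b * a) ≤ ‖b‖ ^ 2 • (star a * a) := by
  have h := CStarAlgebra.star_left_conjugate_le_norm_smul (a := a) (IsSelfAdjoint.star_mul_self b)
  rw [CStarRing.norm_star_mul_self, ← sq] at h
  simpa only [star_mul, mul_assoc] using h

namespace IsStarProjection

variable {p q c : A}

/-- Write `p (q c) = p c + u` and `(1 - p) (q c) = v` with `u + v = (q - p) c`. Then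
`|p c + u|² ≥ |p c|² / 2 - |u|²`, while `|u|² + |v|² = |(q - p) c|² ≤ 2 ‖q - p‖² |p c|²`. -/
theorem star_mul_self_mul_left_le (hp : IsStarProjection p)
    (hc : star ((1 - p) * c) * ((1 - p) * c) ≤ star (p * c) * (p * c)) :
    star ((1 - p) * (q * c)) * ((1 - p) * (q * c))
        + (1 / 2 - 2 * ‖q - p‖ ^ 2) • (star (p * c) * (p * c))
      ≤ star (p * (q * c)) * (p * (q * c)) := by
  set d := ‖q - p‖
  set x := p * c
  set u := p * ((q - p) * c)
  set v := (1 - p) * ((q - p) * c)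
  have hx' : p * (q * c) = x + u := by
    rw [show p * (q * c) = p * p * c + u by simp only [u]; noncomm_ring, hp.isIdempotentElem.eq]
  have hv : (1 - p) * (q * c) = v := by
    rw [show (1 - p) * (q * c) = (p - p * p) * c + v by simp only [v]; noncomm_ring,
      hp.isIdempotentElem.eq, sub_self, zero_mul, zero_add]
  have hup : star u * u + star v * v ≤ (2 * d ^ 2) • (star x * x) :=
    calc star u * u + star v * v = star ((q - p) * c) * ((q - p) * c) :=
          hp.star_mul_self_add_star_mul_self_one_sub _
      _ ≤ d ^ 2 • (star c * c) := star_mul_self_le_norm_sq_smul _ _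
      _ = d ^ 2 • (star x * x + star ((1 - p) * c) * ((1 - p) * c)) := by
          rw [hp.star_mul_self_add_star_mul_self_one_sub]
      _ ≤ d ^ 2 • (star x * x + star x * x) := by gcongr
      _ = (2 * d ^ 2) • (star x * x) := by module
  rw [hx', hv]
  calc star v * v + (1 / 2 - 2 * d ^ 2) • (star x * x)
      = ((1 / 2 : ℝ) • (star x * x) + (star u * u + star v * v))
          - (star u * u + (2 * d ^ 2) • (star x * x)) := by module
    _ ≤ (star (x + u) * (x + u) + star u * u + (2 * d ^ 2) • (star x * x))
          - (star u * u + (2 * d ^ 2) • (star x * x)) :=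
        sub_le_sub_right (add_le_add (half_smul_star_mul_self_le x u) hup) _
    _ = star (x + u) * (x + u) := by abel

theorem star_mul_self_pow_mul_le (hp : IsStarProjection p) (hg : 0 ≤ 1 / 2 - 2 * ‖q - p‖ ^ 2)
    (n : ℕ) :
    star ((1 - p) * (q ^ n * p)) * ((1 - p) * (q ^ n * p))
        ≤ star (p * (q ^ n * p)) * (p * (q ^ n * p))
      ∧ (1 / 2 - 2 * ‖q - p‖ ^ 2) ^ n • p ≤ star (p * (q ^ n * p)) * (p * (q ^ n * p)) := by
  set g := 1 / 2 - 2 * ‖q - p‖ ^ 2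
  induction n with
  | zero =>
    simp only [pow_zero, one_mul, one_smul, hp.isSelfAdjoint.star_eq,
      hp.isIdempotentElem.eq, sub_mul, sub_self, mul_zero]
    exact ⟨hp.nonneg, le_rfl⟩
  | succ n ih =>
    obtain ⟨hdom, hlow⟩ := ih
    have step := hp.star_mul_self_mul_left_le (q := q) hdom
    have hgX : 0 ≤ g • (star (p * (q ^ n * p)) * (p * (q ^ n * p))) :=
      smul_nonneg hg (star_mul_self_nonneg _)
    rw [pow_succ', mul_assoc]
    refine ⟨(le_add_of_nonneg_right hgX).trans step, ?_⟩
    calc g ^ (n + 1) • p = g • (g ^ n • p) := by rw [pow_succ', mul_smul]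
      _ ≤ g • (star (p * (q ^ n * p)) * (p * (q ^ n * p))) := smul_le_smul_of_nonneg_left hlow hg
      _ ≤ _ := (le_add_of_nonneg_left (star_mul_self_nonneg _)).trans step

theorem pow_le_norm_pow_sq (hp : IsStarProjection p) (hp0 : p ≠ 0)
    (hg : 0 ≤ 1 / 2 - 2 * ‖q - p‖ ^ 2) (n : ℕ) :
    (1 / 2 - 2 * ‖q - p‖ ^ 2) ^ n ≤ ‖q ^ n‖ ^ 2 := by
  have hnorm := hp.norm_eq_one hp0
  have hcompress : ‖p * (q ^ n * p)‖ ≤ ‖q ^ n‖ :=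
    calc ‖p * (q ^ n * p)‖ ≤ ‖p‖ * (‖q ^ n‖ * ‖p‖) :=
          (norm_mul_le _ _).trans (by gcongr; exact norm_mul_le _ _)
      _ = ‖q ^ n‖ := by rw [hnorm, one_mul, mul_one]
  calc (1 / 2 - 2 * ‖q - p‖ ^ 2) ^ n = ‖(1 / 2 - 2 * ‖q - p‖ ^ 2) ^ n • p‖ := by
        rw [norm_smul, hnorm, mul_one, Real.norm_of_nonneg (pow_nonneg hg n)]
    _ ≤ ‖star (p * (q ^ n * p)) * (p * (q ^ n * p))‖ :=
        CStarAlgebra.norm_le_norm_of_nonneg_of_le (smul_nonneg (pow_nonneg hg n) hp.nonneg)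
          (hp.star_mul_self_pow_mul_le hg n).2
    _ = ‖p * (q ^ n * p)‖ ^ 2 := by rw [CStarRing.norm_star_mul_self, sq]
    _ ≤ ‖q ^ n‖ ^ 2 := by gcongr

end IsStarProjection

end CStarAlgebra

/-- In a unital C*-algebra, every nonzero projection is at distance at least `1/2`
from every quasinilpotent element. -/
theorem projection_dist_quasinilpotent_ge_half
    {A : Type*} [CStarAlgebra A] (P : A)
    (hsa : IsSelfAdjoint P) (hidem : IsIdempotentElem P) (hP : P ≠ 0)
    (Q : A) (hQ : spectrum ℂ Q = {0}) :
    (1 : ℝ) / 2 ≤ ‖P - Q‖ := by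
  by_contra! hlt
  let _ : PartialOrder A := CStarAlgebra.spectralOrder A
  have _ : StarOrderedRing A := CStarAlgebra.spectralOrderedRing A
  have hp : IsStarProjection P := ⟨hidem, hsa⟩
  set g := 1 / 2 - 2 * ‖Q - P‖ ^ 2
  have hg : 0 < g := by
    have : ‖Q - P‖ ^ 2 < (1 / 2) ^ 2 := by rw [norm_sub_rev]; gcongr
    simp only [g]
    linarith
  have hgrowth (n : ℕ) : √g ^ n ≤ ‖Q ^ n‖ := by
    rw [← pow_le_pow_iff_left₀ (by positivity) (norm_nonneg _) two_ne_zero, ← pow_mul, mul_comm,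
      pow_mul, Real.sq_sqrt hg.le]
    exact hp.pow_le_norm_pow_sq hP hg.le n
  have hrad : spectralRadius ℂ Q = 0 := by simp [spectralRadius, hQ]
  have := le_spectralRadius_of_pow_le_norm_pow (Real.sqrt_nonneg g) hgrowth
  rw [hrad, nonpos_iff_eq_zero, ENNReal.ofReal_eq_zero] at this
  linarith [Real.sqrt_pos.2 hg]
end

section
/- For every n ∈ ℕ, any nilpotent matrix M ∈ M_n(ℂ) has trace zero; consequently, for the diagonal matrix A_n = diag(1/2ⁿ, 2/2ⁿ, …, 1) ∈ M_{2ⁿ}(ℂ), the distance (in operator norm) from A_n to the set of nilpotent 2ⁿ × 2ⁿ matrices satisfies liminf_{n→∞} dist(A_n, Nil(M_{2ⁿ}(ℂ))) ≥ 1/2. -/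
open scoped Matrix.Norms.L2Operator

/-!
Trace is a linear functional of norm `card n` for the operator norm (each diagonal entry is
bounded by the norm), and it vanishes on nilpotent matrices. Hence every nilpotent `N` satisfies
`‖trace A‖ = ‖trace (A - N)‖ ≤ 2ⁿ ‖A - N‖`, and `trace Aₙ = (2ⁿ + 1) / 2` gives distance at
least `1 / 2`. The bound `‖Aₙ‖ ≤ 1` keeps the sequence bounded, so the liminf is meaningful.
-/

namespace Matrix

variable {𝕜 m n : Type*} [RCLike 𝕜] [Fintype m] [Fintype n] [DecidableEq n]

lemma norm_apply_le_l2_opNorm (A : Matrix m n 𝕜) (i : m) (j : n) : ‖A i j‖ ≤ ‖A‖ :=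
  calc ‖A i j‖ = ‖(EuclideanSpace.equiv m 𝕜).symm (A *ᵥ EuclideanSpace.single j 1) i‖ := by
        simp [EuclideanSpace.single, mulVec_single]
    _ ≤ ‖(EuclideanSpace.equiv m 𝕜).symm (A *ᵥ EuclideanSpace.single j 1)‖ :=
        PiLp.norm_apply_le _ _
    _ ≤ ‖A‖ * ‖EuclideanSpace.single j (1 : 𝕜)‖ := A.l2_opNorm_mulVec _
    _ = ‖A‖ := by simp

lemma norm_trace_le_card_mul_l2_opNorm (A : Matrix n n 𝕜) :
    ‖trace A‖ ≤ Fintype.card n * ‖A‖ :=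
  calc ‖trace A‖ ≤ ∑ i, ‖A i i‖ := norm_sum_le _ _
    _ ≤ ∑ _ : n, ‖A‖ := Finset.sum_le_sum fun i _ => A.norm_apply_le_l2_opNorm i i
    _ = Fintype.card n * ‖A‖ := by simp

lemma norm_trace_le_card_mul_infDist_isNilpotent (A : Matrix n n 𝕜) :
    ‖trace A‖ ≤ Fintype.card n * Metric.infDist A {N | IsNilpotent N} := by
  rcases isEmpty_or_nonempty n with _ | _
  · simp
  have hcard : (0 : ℝ) < Fintype.card n := by exact_mod_cast Fintype.card_pos
  rw [← div_le_iff₀' hcard, Metric.le_infDist ⟨0, IsNilpotent.zero⟩]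
  intro N hN
  have htrace : trace (A - N) = trace A := by
    rw [trace_sub, (isNilpotent_trace_of_isNilpotent hN).eq_zero, sub_zero]
  rw [div_le_iff₀' hcard, dist_eq_norm, ← htrace]
  exact norm_trace_le_card_mul_l2_opNorm _

end Matrix

lemma sum_fin_natCast_succ (m : ℕ) :
    ∑ j : Fin m, (((j : ℕ) + 1 : ℕ) : ℂ) = m * (m + 1) / 2 := by
  induction m with
  | zero => simp
  | succ m ih =>
    rw [Fin.sum_univ_castSucc]
    simp only [Fin.val_castSucc, Fin.val_last, ih]
    push_cast
    ring

open Matrix in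
noncomputable def dyadicDiagonal (n : ℕ) : Matrix (Fin (2 ^ n)) (Fin (2 ^ n)) ℂ :=
  diagonal fun j => (((j : ℕ) + 1 : ℕ) : ℂ) / (2 ^ n : ℂ)

lemma trace_dyadicDiagonal (n : ℕ) : (dyadicDiagonal n).trace = ((2 ^ n + 1 : ℕ) : ℂ) / 2 := by
  rw [dyadicDiagonal, Matrix.trace_diagonal, ← Finset.sum_div, sum_fin_natCast_succ]
  push_cast
  field_simp

lemma norm_dyadicDiagonal_le_one (n : ℕ) : ‖dyadicDiagonal n‖ ≤ 1 := by
  rw [dyadicDiagonal, Matrix.l2_opNorm_diagonal, pi_norm_le_iff_of_nonneg zero_le_one]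
  intro j
  rw [norm_div, Complex.norm_natCast, norm_pow, Complex.norm_two, div_le_one (by positivity)]
  exact_mod_cast j.isLt

lemma half_le_infDist_dyadicDiagonal_isNilpotent (n : ℕ) :
    1 / 2 ≤ Metric.infDist (dyadicDiagonal n) {N | IsNilpotent N} := by
  have h := (dyadicDiagonal n).norm_trace_le_card_mul_infDist_isNilpotent
  rw [trace_dyadicDiagonal, norm_div, Complex.norm_natCast, Complex.norm_two,
    Fintype.card_fin] at h
  push_cast at h
  rw [div_le_iff₀ (by positivity)]
  nlinarith [pow_pos (two_pos : (0 : ℝ) < 2) n]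

lemma infDist_dyadicDiagonal_isNilpotent_le_one (n : ℕ) :
    Metric.infDist (dyadicDiagonal n) {N | IsNilpotent N} ≤ 1 :=
  calc _ ≤ dist (dyadicDiagonal n) 0 := Metric.infDist_le_dist_of_mem IsNilpotent.zero
    _ = ‖dyadicDiagonal n‖ := dist_zero_right _
    _ ≤ 1 := norm_dyadicDiagonal_le_one n

/-- Nilpotent complex matrices have trace zero; consequently, for the diagonal
matrices `A_n = diag(1/2ⁿ, 2/2ⁿ, …, 1) ∈ M_{2ⁿ}(ℂ)` the distance (in operator
norm) to the nilpotent matrices satisfies `liminf dist(A_n, Nil) ≥ 1/2`. -/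
theorem liminf_dist_diag_nilpotent_ge_half :
    (∀ (n : ℕ) (M : Matrix (Fin n) (Fin n) ℂ), IsNilpotent M → Matrix.trace M = 0) ∧
    (1 / 2 : ℝ) ≤ Filter.liminf
      (fun n : ℕ =>
        Metric.infDist
          (Matrix.diagonal (fun j : Fin (2 ^ n) => (((j : ℕ) + 1 : ℕ) : ℂ) / (2 ^ n : ℂ)))
          {M : Matrix (Fin (2 ^ n)) (Fin (2 ^ n)) ℂ | IsNilpotent M})
      Filter.atTop :=
  ⟨fun _ _ hM => (Matrix.isNilpotent_trace_of_isNilpotent hM).eq_zero,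
    Filter.le_liminf_of_le
      (Filter.isCoboundedUnder_ge_of_le _ infDist_dyadicDiagonal_isNilpotent_le_one)
      (Filter.Eventually.of_forall half_le_infDist_dyadicDiagonal_isNilpotent)⟩
end

section
/- Let 𝔄 be an AF C*-algebra, written as the closure of an increasing union of finite-dimensional C*-subalgebras 𝔄_k. If T ∈ 𝔄 is a norm limit of quasinilpotent elements of 𝔄, then T is a norm limit of nilpotent elements belonging to the subalgebras 𝔄_k. -/
/-!
Approximate a quasinilpotent `Q` by some `B ∈ 𝔄ₖ`; by upper semicontinuity of the spectral radius
(Gelfand's formula), `B` has spectral radius at most a small `r`. Inside the finite-dimensional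
C*-algebra `𝔄ₖ`, Schur triangularization is carried out intrinsically: a left eigenvector `x` of
`B` gives, through the support projection `q` of `x⋆x`, a projection with `q B = μ q`, and one
recurses on the corner `(1 - q) 𝔄ₖ (1 - q)`. This writes `B = d + m` with `m` nilpotent and
`d⋆d ≤ r²`, so `‖B - m‖ ≤ r`.
-/

open scoped NNReal ENNReal

theorem IsIntegral.finite_spectrum {𝕜 R : Type*} [Field 𝕜] [Ring R] [Algebra 𝕜 R] {a : R}
    (ha : IsIntegral 𝕜 a) : (spectrum 𝕜 a).Finite := by
  rcases subsingleton_or_nontrivial R with _ | _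
  · simp [spectrum.of_subsingleton]
  obtain ⟨f, hmonic, hf⟩ := ha
  have hf' : Polynomial.aeval a f = 0 := hf
  refine (f.finite_setOfPred_isRoot hmonic.ne_zero).subset fun z hz => ?_
  simpa [hf', spectrum.zero_eq] using spectrum.subset_polynomial_aeval a f ⟨z, hz, rfl⟩

theorem isNilpotent_add_of_mul_eq_zero {R : Type*} [Semiring R] {x y : R} (hxy : x * y = 0)
    (hx : IsNilpotent x) (hy : IsNilpotent y) : IsNilpotent (x + y) := by
  obtain ⟨N, hN⟩ := hx
  obtain ⟨M, hM⟩ := hy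
  have hx_pow : ∀ k, x * (x + y) ^ k = x ^ (k + 1) := by
    intro k
    induction k with
    | zero => simp
    | succ k ih =>
      rw [pow_succ, ← mul_assoc, ih, mul_add, pow_succ, mul_assoc _ x y, hxy, mul_zero, add_zero,
        pow_succ _ (k + 1), pow_succ]
  -- a product of `x`s and `y`s vanishes once an `x` precedes a `y`
  have hpow : ∀ k, ∃ a, (x + y) ^ k = y ^ k + a * x := by
    intro k
    induction k with
    | zero => exact ⟨0, by simp⟩
    | succ k ih =>
      obtain ⟨a, ha⟩ := ih
      refine ⟨y ^ k + a * x, ?_⟩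
      rw [pow_succ, ha, mul_add, add_mul, add_mul, mul_assoc a x y, hxy, mul_zero, add_zero,
        pow_succ]
      abel
  obtain ⟨a, ha⟩ := hpow M
  refine ⟨M + N, ?_⟩
  rw [pow_add, ha, hM, zero_add, mul_assoc, hx_pow, pow_succ, hN, zero_mul, mul_zero]

section UpperSemicontinuous

variable {A : Type*} [NormedRing A] [NormedAlgebra ℂ A] [CompleteSpace A] [NormOneClass A]

theorem upperSemicontinuous_spectralRadius : UpperSemicontinuous (spectralRadius ℂ : A → ℝ≥0∞) := by
  intro a r hr
  obtain ⟨n, hn⟩ := ((spectrum.pow_nnnorm_pow_one_div_tendsto_nhds_spectralRadius a).eventually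
    (gt_mem_nhds hr)).exists_forall_of_atTop
  have hcont : Continuous fun b : A => (‖b ^ (n + 1)‖₊ : ℝ≥0∞) ^ (1 / (n + 1 : ℕ) : ℝ) :=
    (ENNReal.continuous_rpow_const.comp (ENNReal.continuous_coe.comp
      (continuous_nnnorm.comp (continuous_pow _))))
  filter_upwards [hcont.continuousAt.eventually_lt continuousAt_const (hn (n + 1) n.le_succ)]
    with b hb
  refine lt_of_le_of_lt ?_ hb
  simpa using spectrum.spectralRadius_le_pow_nnnorm_pow_one_div ℂ b n

end UpperSemicontinuous

section Corner

variable {R A : Type*} [Field R] [Ring A] [Algebra R A] (S : Subalgebra R A)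

/-- This is `p S p` when `p ∈ S` is idempotent. -/
def corner (p : A) : Submodule R A where
  carrier := {x | x ∈ S ∧ p * x = x ∧ x * p = x}
  add_mem' := fun ⟨hxS, hpx, hxp⟩ ⟨hyS, hpy, hyp⟩ =>
    ⟨add_mem hxS hyS, by rw [mul_add, hpx, hpy], by rw [add_mul, hxp, hyp]⟩
  zero_mem' := ⟨zero_mem S, mul_zero p, zero_mul p⟩
  smul_mem' := fun c x ⟨hxS, hpx, hxp⟩ =>
    ⟨Subalgebra.smul_mem S hxS c, by rw [mul_smul_comm, hpx], by rw [smul_mul_assoc, hxp]⟩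

variable {S} {p q e b x y : A} {μ : R}

theorem mul_mem_corner (hx : x ∈ corner S p) (hy : y ∈ corner S p) : x * y ∈ corner S p :=
  ⟨mul_mem hx.1 hy.1, by rw [← mul_assoc, hx.2.1], by rw [mul_assoc, hy.2.2]⟩

theorem self_mem_corner (hpS : p ∈ S) (hp : IsIdempotentElem p) : p ∈ corner S p :=
  ⟨hpS, hp, hp⟩

theorem corner_le_corner (hpe : p * e = e) (hep : e * p = e) : corner S e ≤ corner S p :=
  fun _ ⟨hxS, hex, hxe⟩ => ⟨hxS, by rw [← hex, ← mul_assoc, hpe], by rw [← hxe, mul_assoc, hep]⟩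

instance [FiniteDimensional R S] : FiniteDimensional R (corner S p) :=
  Submodule.finiteDimensional_of_le (S₂ := Subalgebra.toSubmodule S) fun _ hx => hx.1

variable (S) in
def cornerLeftEigenvalues (p b : A) : Set R := {μ | ∃ x ∈ corner S p, x ≠ 0 ∧ x * b = μ • x}

theorem mul_mul_self_mem_corner (hbS : b ∈ S) (heS : e ∈ S) (he : IsIdempotentElem e) :
    e * b * e ∈ corner S e :=
  ⟨mul_mem (mul_mem heS hbS) heS, by rw [← mul_assoc, ← mul_assoc, he.eq],
    by rw [mul_assoc, he.eq]⟩

theorem corner_sub_le (hp : IsIdempotentElem p) (hq : q ∈ corner S p) :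
    corner S (p - q) ≤ corner S p :=
  corner_le_corner (by rw [mul_sub, hp.eq, hq.2.1]) (by rw [sub_mul, hp.eq, hq.2.2])

theorem corner_sub_lt (hp : IsIdempotentElem p) (hq : q ∈ corner S p) (hq' : IsIdempotentElem q)
    (hq0 : q ≠ 0) : corner S (p - q) < corner S p := by
  refine lt_of_le_of_ne (corner_sub_le hp hq) fun h => hq0 ?_
  have := (h ▸ hq).2.1
  rwa [sub_mul, hq.2.1, hq'.eq, sub_self, eq_comm] at this

theorem eq_smul_add_add_of_mul_eq_smul (hb : b ∈ corner S p) (hq : q ∈ corner S p)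
    (hq' : IsIdempotentElem q) (hqb : q * b = μ • q) :
    b = μ • q + (p - q) * b * q + (p - q) * b * (p - q) := by
  have hqbq : q * b * q = μ • q := by rw [hqb, smul_mul_assoc, hq'.eq]
  have hqbe : q * b * (p - q) = 0 := by rw [hqb, smul_mul_assoc, mul_sub, hq.2.2, hq'.eq, sub_self,
    smul_zero]
  calc b = (q + (p - q)) * b * (q + (p - q)) := by rw [add_sub_cancel, hb.2.1, hb.2.2]
    _ = _ := by rw [add_mul, add_mul, mul_add, mul_add, hqbq, hqbe]; abel

/-- An eigenvector `x` of the compression is corrected by a multiple of `x b q`. -/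
theorem cornerLeftEigenvalues_sub_subset (hp : IsIdempotentElem p) (hq : q ∈ corner S p)
    (hq' : IsIdempotentElem q) (hb : b ∈ corner S p) (hqb : q * b = μ • q) :
    cornerLeftEigenvalues S (p - q) ((p - q) * b * (p - q)) ⊆
      insert μ (cornerLeftEigenvalues S p b) := by
  rintro ν ⟨x, hx, hx0, hxb⟩
  rcases eq_or_ne ν μ with rfl | hν
  · exact Set.mem_insert ν _
  have hxp : x ∈ corner S p := corner_sub_le hp hq hx
  have hxbe : x * b * (p - q) = ν • x := by rw [← hxb, ← mul_assoc, ← mul_assoc, hx.2.2]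
  have hxb' : x * b = x * b * q + ν • x := by
    rw [← hxbe, ← mul_add, add_sub_cancel, mul_assoc, hb.2.2]
  set y := x + (ν - μ)⁻¹ • (x * b * q)
  have hye : y * (p - q) = x := by
    rw [add_mul, hx.2.2, smul_mul_assoc, mul_assoc, mul_sub, hq.2.2, hq'.eq, sub_self, mul_zero,
      smul_zero, add_zero]
  refine Or.inr ⟨y,
    add_mem hxp (Submodule.smul_mem _ _ (mul_mem_corner (mul_mem_corner hxp hb) hq)),
    fun hy => hx0 (by rw [← hye, hy, zero_mul]), ?_⟩
  calc y * b = x * b * q + ν • x + (ν - μ)⁻¹ • (μ • (x * b * q)) := by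
        rw [add_mul, smul_mul_assoc, mul_assoc (x * b), hqb, mul_smul_comm, ← hxb']
    _ = ν • y := by
        linear_combination (norm := module) -(inv_mul_cancel₀ (sub_ne_zero.mpr hν) • (x * b * q))

theorem cornerLeftEigenvalues_one_subset_spectrum : cornerLeftEigenvalues S 1 b ⊆ spectrum R b :=
  fun μ ⟨x, _, hx0, hxb⟩ hunit => hx0 <| hunit.mul_left_eq_zero.mp <| by
    rw [mul_sub, hxb, Algebra.algebraMap_eq_smul_one, mul_smul_comm, mul_one, sub_self]

theorem cornerLeftEigenvalues_nonempty [IsAlgClosed R] [FiniteDimensional R S]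
    (hpS : p ∈ S) (hp : IsIdempotentElem p) (hp0 : p ≠ 0) (hb : b ∈ corner S p) :
    (cornerLeftEigenvalues S p b).Nonempty := by
  let f : Module.End R (corner S p) :=
    (LinearMap.mulRight R b).restrict fun _ hx => mul_mem_corner hx hb
  have : Nontrivial (corner S p) :=
    ⟨⟨p, self_mem_corner hpS hp⟩, 0, fun h => hp0 congr(Subtype.val $h)⟩
  obtain ⟨μ, hμ⟩ := f.exists_eigenvalue
  obtain ⟨⟨x, hx⟩, hxμ⟩ := hμ.exists_hasEigenvector
  exact ⟨μ, x, hx, fun h => hxμ.2 (Subtype.ext h), congr(Subtype.val $(hxμ.apply_eq_smul))⟩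

end Corner

section CStarAlgebra

variable {A : Type*} [CStarAlgebra A]

theorem cfc_inv_mul_self {a : A} [IsStarNormal a] (ha : (spectrum ℂ a).Finite) :
    cfc (·⁻¹ : ℂ → ℂ) a * a = cfc (fun z : ℂ => z⁻¹ * z) a := by
  rw [cfc_mul _ _ a (ha.continuousOn _) (ha.continuousOn _), cfc_id' ℂ a]

theorem isStarProjection_cfc_inv_mul_self {a : A} [IsStarNormal a]
    (ha : (spectrum ℂ a).Finite) : IsStarProjection (cfc (·⁻¹ : ℂ → ℂ) a * a) := by
  rw [cfc_inv_mul_self ha]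
  constructor
  · rw [IsIdempotentElem, ← cfc_mul _ _ a (ha.continuousOn _) (ha.continuousOn _)]
    congr 1; funext z
    rcases eq_or_ne z 0 with rfl | hz <;> simp [*]
  · rw [IsSelfAdjoint, ← cfc_star]
    congr 1; funext z
    rcases eq_or_ne z 0 with rfl | hz <;> simp [*]

theorem mul_cfc_inv_mul_self {a : A} [IsStarNormal a] (ha : (spectrum ℂ a).Finite) :
    a * (cfc (·⁻¹ : ℂ → ℂ) a * a) = a := calc
  _ = cfc (fun z : ℂ => z) a * cfc (fun z : ℂ => z⁻¹ * z) a := by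
    rw [cfc_inv_mul_self ha, cfc_id' ℂ a]
  _ = cfc (fun z : ℂ => z) a := by
    rw [← cfc_mul _ _ a (ha.continuousOn _) (ha.continuousOn _)]
    congr 1; funext z
    rcases eq_or_ne z 0 with rfl | hz <;> simp [*]
  _ = a := cfc_id' ℂ a

variable {S : StarSubalgebra ℂ A} [FiniteDimensional ℂ S] {p b x : A} {μ : ℂ}

theorem exists_isStarProjection_mem_corner_mul_eq_smul (hp : IsSelfAdjoint p)
    (hx : x ∈ corner S.toSubalgebra p) (hx0 : x ≠ 0) (hxb : x * b = μ • x) :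
    ∃ q ∈ corner S.toSubalgebra p, IsStarProjection q ∧ q ≠ 0 ∧ q * b = μ • q := by
  have : IsClosed (S : Set A) := S.toSubalgebra.toSubmodule.closed_of_finiteDimensional
  set h := star x * x with h_def
  have hhS : h ∈ S := mul_mem (star_mem hx.1) hx.1
  have hfin : (spectrum ℂ h).Finite :=
    ((Algebra.IsIntegral.isIntegral (⟨h, hhS⟩ : S)).map S.subtype).finite_spectrum
  have : IsStarNormal h := (IsSelfAdjoint.star_mul_self x).isStarNormal
  have hwS : cfc (·⁻¹ : ℂ → ℂ) h ∈ S := cfc_mem _ hhS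
  set q := cfc (·⁻¹ : ℂ → ℂ) h * h with hq_def
  have hq : IsStarProjection q := isStarProjection_cfc_inv_mul_self hfin
  have hqp : q * p = q := by rw [hq_def, mul_assoc, h_def, mul_assoc, hx.2.2]
  refine ⟨q, ⟨mul_mem hwS hhS, ?_, hqp⟩, hq, ?_, ?_⟩
  · rw [← hq.isSelfAdjoint.star_eq, ← hp.star_eq, ← star_mul, hqp]
  · intro hq0
    have : h = 0 := by rw [← mul_cfc_inv_mul_self hfin, ← hq_def, hq0, mul_zero]
    exact hx0 ((CStarRing.star_mul_self_eq_zero_iff x).mp this)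
  · rw [hq_def, mul_assoc, h_def, mul_assoc, hxb, mul_smul_comm, mul_smul_comm]

theorem star_smul_add_mul_smul_add_le [PartialOrder A] [StarOrderedRing A] {q d e : A}
    (hq : IsStarProjection q) (hqd : q * d = 0) {r : ℝ} (hμ : ‖μ‖ ≤ r)
    (hd : star d * d ≤ r ^ 2 • e) :
    star (μ • q + d) * (μ • q + d) ≤ r ^ 2 • (q + e) := by
  have hdq : star d * q = 0 := by rw [← hq.isSelfAdjoint.star_eq, ← star_mul, hqd, star_zero]
  have hexpand : star (μ • q + d) * (μ • q + d) = ‖μ‖ ^ 2 • q + star d * d := by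
    simp only [star_add, star_smul, hq.isSelfAdjoint.star_eq, add_mul, mul_add, smul_mul_assoc,
      mul_smul_comm, smul_smul, hq.isIdempotentElem.eq, hqd, hdq, smul_zero, add_zero, zero_add]
    rw [Complex.star_def, Complex.mul_conj', ← Complex.ofReal_pow, Complex.coe_smul]
  have hμ2 : ‖μ‖ ^ 2 ≤ r ^ 2 := pow_le_pow_left₀ (norm_nonneg μ) hμ 2
  rw [hexpand, smul_add]
  exact add_le_add (smul_le_smul_of_nonneg_right hμ2 hq.nonneg) hd

/-- Schur triangularization inside the corner `p S p`, in the form needed for nilpotent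
approximation: `d` collects the diagonal `μ q` and `m` the strictly triangular part. -/
theorem exists_add_isNilpotent_star_mul_le [PartialOrder A] [StarOrderedRing A] {r : ℝ}
    (hpS : p ∈ S) (hp : IsStarProjection p) (hb : b ∈ corner S.toSubalgebra p)
    (hr : ∀ μ ∈ cornerLeftEigenvalues S.toSubalgebra p b, ‖μ‖ ≤ r) :
    ∃ d ∈ corner S.toSubalgebra p, ∃ m ∈ corner S.toSubalgebra p,
      b = d + m ∧ IsNilpotent m ∧ star d * d ≤ r ^ 2 • p := by
  induction hn : Module.finrank ℂ (corner S.toSubalgebra p) using Nat.strong_induction_on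
    generalizing p b with
  | _ n ih =>
  rcases eq_or_ne p 0 with rfl | hp0
  · have hb0 : b = 0 := by rw [← hb.2.1, zero_mul]
    exact ⟨0, zero_mem _, 0, zero_mem _, by rw [hb0, add_zero], IsNilpotent.zero, by simp⟩
  obtain ⟨μ, hμ⟩ := cornerLeftEigenvalues_nonempty hpS hp.isIdempotentElem hp0 hb
  obtain ⟨x, hx, hx0, hxb⟩ := id hμ
  obtain ⟨q, hq, hqproj, hq0, hqb⟩ :=
    exists_isStarProjection_mem_corner_mul_eq_smul hp.isSelfAdjoint hx hx0 hxb
  have he : IsStarProjection (p - q) := hqproj.sub_of_mul_eq_left hp hq.2.2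
  have hlt := corner_sub_lt hp.isIdempotentElem hq hqproj.isIdempotentElem hq0
  have hr' : ∀ ν ∈ cornerLeftEigenvalues S.toSubalgebra (p - q) ((p - q) * b * (p - q)),
      ‖ν‖ ≤ r := fun ν hν =>
    (cornerLeftEigenvalues_sub_subset hp.isIdempotentElem hq hqproj.isIdempotentElem hb hqb
      hν).elim (fun h => h ▸ hr μ hμ) (hr ν)
  obtain ⟨d, hd, m, hm, hbdm, hmnil, hdd⟩ := ih _ (hn ▸ Submodule.finrank_lt_finrank_of_lt hlt)
    (sub_mem hpS hq.1) he (mul_mul_self_mem_corner hb.1 (sub_mem hpS hq.1) he.isIdempotentElem)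
    hr' rfl
  have hqd : q * d = 0 := by rw [← hd.2.1, ← mul_assoc, mul_sub, hqproj.isIdempotentElem.eq,
    hq.2.2, sub_self, zero_mul]
  have hqm : q * m = 0 := by rw [← hm.2.1, ← mul_assoc, mul_sub, hqproj.isIdempotentElem.eq,
    hq.2.2, sub_self, zero_mul]
  have hpb : (p - q) * b * q ∈ corner S.toSubalgebra p :=
    mul_mem_corner (mul_mem_corner (sub_mem (self_mem_corner hpS hp.isIdempotentElem) hq) hb) hq
  refine ⟨μ • q + d, add_mem (Submodule.smul_mem _ μ hq) (corner_sub_le hp.isIdempotentElem hq hd),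
    (p - q) * b * q + m, add_mem hpb (corner_sub_le hp.isIdempotentElem hq hm), ?_, ?_, ?_⟩
  · conv_lhs => rw [eq_smul_add_add_of_mul_eq_smul hb hq hqproj.isIdempotentElem hqb, hbdm]
    abel
  · refine isNilpotent_add_of_mul_eq_zero (by rw [mul_assoc, hqm, mul_zero]) ⟨2, ?_⟩ hmnil
    rw [pow_two, mul_assoc, ← mul_assoc q, ← mul_assoc q, mul_sub, hqproj.isIdempotentElem.eq,
      hq.2.2, sub_self, zero_mul, zero_mul, mul_zero]
  · simpa using star_smul_add_mul_smul_add_le hqproj hqd (hr μ hμ) hdd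

end CStarAlgebra

theorem exists_isNilpotent_norm_sub_le {A : Type*} [CStarAlgebra A] (S : StarSubalgebra ℂ A)
    [FiniteDimensional ℂ S] {b : A} (hb : b ∈ S) {r : ℝ≥0} (hr : spectralRadius ℂ b ≤ r) :
    ∃ m ∈ S, IsNilpotent m ∧ ‖b - m‖ ≤ r := by
  let _ : PartialOrder A := CStarAlgebra.spectralOrder A
  have _ : StarOrderedRing A := CStarAlgebra.spectralOrderedRing A
  have hleft : ∀ μ ∈ cornerLeftEigenvalues S.toSubalgebra 1 b, ‖μ‖ ≤ r := fun μ hμ => by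
    exact_mod_cast (le_iSup₂ (α := ℝ≥0∞) μ (cornerLeftEigenvalues_one_subset_spectrum hμ)).trans hr
  obtain ⟨d, -, m, hm, rfl, hmnil, hdd⟩ := exists_add_isNilpotent_star_mul_le (one_mem S)
    (IsStarProjection.one A) ⟨hb, one_mul b, mul_one b⟩ hleft
  refine ⟨m, hm.1, hmnil, ?_⟩
  have hnorm : ‖star d * d‖ ≤ (r : ℝ) ^ 2 := by
    rw [CStarAlgebra.norm_le_iff_le_algebraMap _ (by positivity) (star_mul_self_nonneg d)]
    rwa [Algebra.algebraMap_eq_smul_one]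
  rw [CStarRing.norm_star_mul_self, ← pow_two] at hnorm
  rw [add_sub_cancel_right]
  exact pow_le_pow_iff_left₀ (norm_nonneg d) r.2 two_ne_zero |>.mp hnorm

theorem AF_limit_quasinilpotent_iff_limit_nilpotent_general
    {A : Type*} [CStarAlgebra A] (𝔄 : ℕ → StarSubalgebra ℂ A)
    (hfd : ∀ k, FiniteDimensional ℂ (𝔄 k))
    (hdense : closure (⋃ k, (𝔄 k : Set A)) = Set.univ)
    (T : A) (hT : T ∈ closure {Q : A | spectrum ℂ Q = {0}}) :
    T ∈ closure {M : A | (∃ k, M ∈ 𝔄 k) ∧ IsNilpotent M} := by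
  nontriviality A
  refine closure_minimal (fun Q hQ => Metric.mem_closure_iff.mpr fun ε hε => ?_) isClosed_closure hT
  set r : ℝ≥0 := ⟨ε / 2, (half_pos hε).le⟩
  have hr : 0 < r := NNReal.coe_pos.mp (half_pos hε)
  have hQr : spectralRadius ℂ Q < r := by
    simpa [spectralRadius, show spectrum ℂ Q = {0} from hQ] using hr
  obtain ⟨B, hB, hBr, hBQ⟩ := (dense_iff_closure_eq.mpr hdense).inter_nhds_nonempty
    (Filter.inter_mem (upperSemicontinuous_spectralRadius Q r hQr) (Metric.ball_mem_nhds Q hr))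
  obtain ⟨k, hBk⟩ := Set.mem_iUnion.mp hB
  have := hfd k
  obtain ⟨m, hm, hmnil, hBm⟩ := exists_isNilpotent_norm_sub_le (𝔄 k) hBk hBr.le
  refine ⟨m, ⟨⟨k, hm⟩, hmnil⟩, ?_⟩
  calc dist Q m ≤ dist Q B + dist B m := dist_triangle Q B m
    _ < r + r := add_lt_add_of_lt_of_le (by rwa [dist_comm]) (by rwa [dist_eq_norm])
    _ = ε := add_halves ε

/-- In an AF C*-algebra `𝔄 = cl(⋃ 𝔄ₖ)` (with `𝔄ₖ` an increasing chain of
finite-dimensional C*-subalgebras), every norm limit of quasinilpotent elements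
of `𝔄` is a norm limit of nilpotent elements of the subalgebras `𝔄ₖ`. -/
theorem AF_limit_quasinilpotent_iff_limit_nilpotent
    {A : Type*} [CStarAlgebra A] (𝔄 : ℕ → StarSubalgebra ℂ A)
    (hmono : Monotone 𝔄) (hfd : ∀ k, FiniteDimensional ℂ (𝔄 k))
    (hdense : closure (⋃ k, (𝔄 k : Set A)) = Set.univ)
    (T : A) (hT : T ∈ closure {Q : A | spectrum ℂ Q = {0}}) :
    T ∈ closure {M : A | (∃ k, M ∈ 𝔄 k) ∧ IsNilpotent M} :=
  AF_limit_quasinilpotent_iff_limit_nilpotent_general 𝔄 hfd hdense T hT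
end

section
/- Let 𝔄 be a C*-algebra admitting a faithful tracial state τ. Then no nonzero positive element of 𝔄 is a norm limit of nilpotent elements of 𝔄; more precisely, if A ∈ 𝔄₊ is a norm limit of nilpotents then τ(A) = 0 and hence A = 0. -/
/-!
A positive functional on a C⋆-algebra is bounded, so `τ` is continuous and it suffices that `τ`
kills nilpotents. A nilpotent `x` is similar to elements of arbitrarily small norm (as in Rota's
theorem): if `1 ≤ S` and `star x * S * x ≤ ε ^ 2 • S`, then `‖S ^ (1/2) * x * S ^ (-1/2)‖ ≤ ε`.
Traciality makes `τ` constant on similarity orbits, so by continuity `τ x = τ 0 = 0`.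
-/

open Finset CFC

section

variable {A : Type*} [CStarAlgebra A] [PartialOrder A] [StarOrderedRing A]

theorem LinearMap.continuous_of_map_nonneg {B : Type*} [CStarAlgebra B] [PartialOrder B]
    [StarOrderedRing B] (τ : A →ₗ[ℂ] B) (hτ : ∀ a, 0 ≤ a → 0 ≤ τ a) :
    Continuous τ :=
  map_continuous (PositiveLinearMap.mk₀ τ hτ)

/-- The witness is the finite Neumann series `S = ∑ j, k⁻ʲ • star (x ^ j) * x ^ j`, which solves
the Stein equation `S = 1 + k⁻¹ • star x * S * x`. -/
theorem exists_one_le_star_mul_mul_le_smul_of_isNilpotent {x : A} (hx : IsNilpotent x) {k : ℝ}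
    (hk : 0 < k) : ∃ S : A, 1 ≤ S ∧ star x * S * x ≤ k • S := by
  obtain ⟨n, hn⟩ := hx
  set P : ℕ → A := fun j => star (x ^ j) * x ^ j
  have hP : ∀ j, star x * P j * x = P (j + 1) := fun j => by
    simp only [P, pow_succ, star_mul, mul_assoc]
  set S := ∑ j ∈ range n, k⁻¹ ^ j • P j
  have hS : 0 ≤ S := sum_nonneg fun j _ => smul_nonneg (by positivity) (star_mul_self_nonneg _)
  have hstein : S = 1 + k⁻¹ • (star x * S * x) := by
    have hshift := (sum_range_succ' (fun j => k⁻¹ ^ j • P j) n).symm.trans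
      (sum_range_succ (fun j => k⁻¹ ^ j • P j) n)
    have hP0 : P 0 = 1 := by simp [P]
    have hPn : P n = 0 := by simp [P, hn]
    rw [hP0, hPn, pow_zero, one_smul, smul_zero, add_zero] at hshift
    refine hshift.symm.trans ?_
    rw [mul_sum, sum_mul, smul_sum, add_comm]
    congr 1
    refine sum_congr rfl fun j _ => ?_
    rw [mul_smul_comm, smul_mul_assoc, hP, smul_smul, ← pow_succ']
  have hconj : 0 ≤ k⁻¹ • (star x * S * x) :=
    smul_nonneg (by positivity) (star_left_conjugate_nonneg hS x)
  refine ⟨S, hstein ▸ le_add_of_nonneg_right hconj, ?_⟩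
  calc star x * S * x = k • (k⁻¹ • (star x * S * x)) := by
        rw [smul_smul, mul_inv_cancel₀ hk.ne', one_smul]
    _ = k • (S - 1) := by rw [eq_sub_of_add_eq' hstein.symm]
    _ ≤ k • S := smul_le_smul_of_nonneg_left (sub_le_self S zero_le_one) hk.le

theorem exists_units_norm_conj_sq_le {S x : A} (hS : IsStrictlyPositive S) {k : ℝ} (hk : 0 ≤ k)
    (h : star x * S * x ≤ k • S) : ∃ u : Aˣ, ‖(u : A) * x * ↑u⁻¹‖ ^ 2 ≤ k := by
  let u : Aˣ := ⟨S ^ (1 / 2 : ℝ), S ^ (-(1 / 2) : ℝ), rpow_mul_rpow_neg _ hS,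
    rpow_neg_mul_rpow _ hS⟩
  refine ⟨u, ?_⟩
  have hsa : ∀ r : ℝ, star (S ^ r) = S ^ r := fun r =>
    (IsSelfAdjoint.of_nonneg rpow_nonneg).star_eq
  have hhalf : S ^ (1 / 2 : ℝ) * S ^ (1 / 2 : ℝ) = S := by
    rw [← rpow_add hS.isUnit, add_halves, rpow_one S hS.nonneg]
  have hstar : star ((u : A) * x * ↑u⁻¹) * ((u : A) * x * ↑u⁻¹)
      = S ^ (-(1 / 2) : ℝ) * (star x * S * x) * S ^ (-(1 / 2) : ℝ) := by
    change star (S ^ (1 / 2 : ℝ) * x * S ^ (-(1 / 2) : ℝ)) *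
      (S ^ (1 / 2 : ℝ) * x * S ^ (-(1 / 2) : ℝ)) = _
    simp only [star_mul, hsa]
    generalize S ^ (-(1 / 2) : ℝ) = t
    generalize S ^ (1 / 2 : ℝ) = s at hhalf ⊢
    subst hhalf
    noncomm_ring
  have hle : star ((u : A) * x * ↑u⁻¹) * ((u : A) * x * ↑u⁻¹) ≤ algebraMap ℝ A k :=
    calc _ = _ := hstar
      _ ≤ S ^ (-(1 / 2) : ℝ) * (k • S) * S ^ (-(1 / 2) : ℝ) :=
          IsSelfAdjoint.conjugate_le_conjugate h (.of_nonneg rpow_nonneg)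
      _ = algebraMap ℝ A k := by
          rw [mul_smul_comm, smul_mul_assoc, conjugate_rpow_neg_one_half S hS,
            Algebra.algebraMap_eq_smul_one]
  rw [sq, ← CStarRing.norm_star_mul_self]
  exact (CStarAlgebra.norm_le_iff_le_algebraMap _ hk (star_mul_self_nonneg _)).2 hle

theorem zero_mem_closure_range_conj_of_isNilpotent {x : A} (hx : IsNilpotent x) :
    (0 : A) ∈ closure (Set.range fun u : Aˣ => (u : A) * x * ↑u⁻¹) := by
  refine Metric.mem_closure_iff.2 fun ε hε => ?_
  obtain ⟨S, hS1, hS⟩ :=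
    exists_one_le_star_mul_mul_le_smul_of_isNilpotent hx (by positivity : 0 < (ε / 2) ^ 2)
  obtain ⟨u, hu⟩ :=
    exists_units_norm_conj_sq_le (isStrictlyPositive_one.of_le hS1) (by positivity) hS
  refine ⟨_, ⟨u, rfl⟩, ?_⟩
  rw [dist_zero_left]
  linarith [(pow_le_pow_iff_left₀ (norm_nonneg _) (by positivity) two_ne_zero).1 hu]

theorem LinearMap.map_eq_zero_of_isNilpotent {E : Type*} [AddCommGroup E] [Module ℂ E]
    [TopologicalSpace E] [T2Space E] (τ : A →ₗ[ℂ] E) (hτ : Continuous τ)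
    (htracial : ∀ x y, τ (x * y) = τ (y * x)) {x : A} (hx : IsNilpotent x) : τ x = 0 := by
  have hconj : Set.range (fun u : Aˣ => (u : A) * x * ↑u⁻¹) ⊆ {y | τ y = τ x} := by
    rintro _ ⟨u, rfl⟩
    rw [Set.mem_ofPred_eq, htracial, ← mul_assoc, Units.inv_mul, one_mul]
  have hτ0 : τ 0 = τ x := closure_minimal hconj (isClosed_eq hτ continuous_const)
    (zero_mem_closure_range_conj_of_isNilpotent hx)
  exact hτ0.symm.trans (map_zero τ)

end

theorem faithful_trace_kills_positive_limits_of_nilpotents_general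
    {A : Type*} [CStarAlgebra A] [PartialOrder A] [StarOrderedRing A]
    (τ : A →ₗ[ℂ] ℂ)
    (hpos : ∀ a : A, 0 ≤ a → ∃ r : ℝ, 0 ≤ r ∧ τ a = (r : ℂ))
    (htracial : ∀ x y : A, τ (x * y) = τ (y * x))
    (hfaithful : ∀ a : A, 0 ≤ a → τ a = 0 → a = 0)
    (a : A) (ha : 0 ≤ a) (hlim : a ∈ closure {M : A | IsNilpotent M}) :
    τ a = 0 ∧ a = 0 := by
  have hτ : Continuous τ := open scoped ComplexOrder in τ.continuous_of_map_nonneg fun b hb => by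
    obtain ⟨r, hr, hτb⟩ := hpos b hb
    exact hτb ▸ Complex.zero_le_real.2 hr
  have hτa : τ a = 0 :=
    closure_minimal (fun _ hM => τ.map_eq_zero_of_isNilpotent hτ htracial hM)
      (isClosed_eq hτ continuous_const) hlim
  exact ⟨hτa, hfaithful a ha hτa⟩

/-- If a C*-algebra admits a faithful tracial state `τ`, then any positive
element that is a norm limit of nilpotent elements satisfies `τ(A) = 0`;
hence it is zero. -/
theorem faithful_trace_kills_positive_limits_of_nilpotents
    {A : Type*} [CStarAlgebra A] [PartialOrder A] [StarOrderedRing A]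
    (τ : A →ₗ[ℂ] ℂ)
    (hpos : ∀ a : A, 0 ≤ a → ∃ r : ℝ, 0 ≤ r ∧ τ a = (r : ℂ))
    (hone : τ 1 = 1)
    (htracial : ∀ x y : A, τ (x * y) = τ (y * x))
    (hfaithful : ∀ a : A, 0 ≤ a → τ a = 0 → a = 0)
    (a : A) (ha : 0 ≤ a) (hlim : a ∈ closure {M : A | IsNilpotent M}) :
    τ a = 0 ∧ a = 0 :=
  faithful_trace_kills_positive_limits_of_nilpotents_general τ hpos htracial hfaithful a ha hlim
end
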